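/- arXiv:1312.7418 — 6 statements merged into one kernel-verified Lean document; each statement's English description precedes it below -/
import Mathlib

section
/- Let G ⊂ Diff^1_+([0,1]) be a group such that there exists a sequence h_n ∈ Diff^1_+([0,1]) with h_n g h_n^{-1} → id in the C^1 topology for every g ∈ G. Then there exists a C^1-continuous path h_t ∈ Diff^1_+([0,1]), t ∈ [0,1), such that h_t g h_t^{-1} → id in the C^1 topology as t → 1, for every g ∈ G. -/
open Set Filter

noncomputable section

/-- `f` is an orientation-preserving C¹ diffeomorphism of `[0,1]`, modeled as a
bijection of `ℝ` that equals the identity outside `[0,1]`. -/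
def DiffOnIcc (f : Equiv.Perm ℝ) : Prop :=
  (∀ x : ℝ, x ∉ Icc (0:ℝ) 1 → f x = x) ∧
  MapsTo ⇑f (Icc (0:ℝ) 1) (Icc (0:ℝ) 1) ∧
  StrictMonoOn ⇑f (Icc (0:ℝ) 1) ∧
  ContDiffOn ℝ 1 ⇑f (Icc (0:ℝ) 1) ∧
  ContDiffOn ℝ 1 ⇑f.symm (Icc (0:ℝ) 1) ∧
  ∀ x ∈ Icc (0:ℝ) 1, 0 < derivWithin ⇑f (Icc (0:ℝ) 1) x

/-- The derivative (within `[0,1]`) of a diffeomorphism of `[0,1]`. -/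
def D (f : Equiv.Perm ℝ) (x : ℝ) : ℝ := derivWithin ⇑f (Icc (0:ℝ) 1) x

/-- `f` is an orientation-preserving homeomorphism of `[0,1]`, modeled as a
bijection of `ℝ` that equals the identity outside `[0,1]`. -/
def HomeoOnIcc (f : Equiv.Perm ℝ) : Prop :=
  (∀ x : ℝ, x ∉ Icc (0:ℝ) 1 → f x = x) ∧
  MapsTo ⇑f (Icc (0:ℝ) 1) (Icc (0:ℝ) 1) ∧
  StrictMonoOn ⇑f (Icc (0:ℝ) 1) ∧
  ContinuousOn ⇑f (Icc (0:ℝ) 1)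

/-- `(a,b)` is a connected component of `[0,1] \ Fix f`: `a`, `b` are fixed and
there is no fixed point in between. -/
def IsCompFix (f : Equiv.Perm ℝ) (a b : ℝ) : Prop :=
  a ∈ Icc (0:ℝ) 1 ∧ b ∈ Icc (0:ℝ) 1 ∧ a < b ∧ f a = a ∧ f b = b ∧
  ∀ x ∈ Ioo a b, f x ≠ x

/-- `{a,b}` is a pair of successive fixed points of the group `G`. -/
def SuccFix (G : Subgroup (Equiv.Perm ℝ)) (a b : ℝ) : Prop :=
  ∃ g ∈ G, IsCompFix g a b

/-! Interpolate affinely between consecutive conjugators `h n` and `h (n+1)`, running through the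
`n`-th segment while `t / (1 - t)` runs through `[n, n+1]`. A convex combination of
diffeomorphisms of `[0,1]` is again one, and conjugating by it is controlled by conjugating by the
two endpoints, so the conjugates along the `n`-th segment are as close to the identity as those
by `h n` and `h (n+1)`. The pair `(H t, (H t)')` depends piecewise affinely, hence continuously,
on `t`, which is C¹-continuity of the path. -/

open Topology

lemma Equiv.Perm.mapsTo_of_forall_notMem_apply_eq {α : Type*} {f : Equiv.Perm α} {s : Set α}
    (h : ∀ x ∉ s, f x = x) : MapsTo f s s := fun x hx ↦ by
  by_contra hfx
  exact hfx (by rwa [f.injective (h _ hfx)])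

lemma Equiv.Perm.symm_apply_eq_of_apply_eq {α : Type*} {f : Equiv.Perm α} {s : Set α}
    (h : ∀ x ∉ s, f x = x) : ∀ x ∉ s, f.symm x = x :=
  fun x hx ↦ f.symm_apply_eq.2 (h x hx).symm

lemma strictMono_of_strictMonoOn_Icc {f : Equiv.Perm ℝ} {a b : ℝ}
    (hout : ∀ x ∉ Icc a b, f x = x) (hmono : StrictMonoOn f (Icc a b)) : StrictMono f := by
  have hmaps := Equiv.Perm.mapsTo_of_forall_notMem_apply_eq hout
  intro x y hxy
  by_cases hx : x ∈ Icc a b <;> by_cases hy : y ∈ Icc a b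
  · exact hmono hx hy hxy
  · have hby : b < y := by
      simp only [mem_Icc, not_and_or, not_le] at hy
      exact hy.resolve_left (by linarith [hx.1])
    linarith [(hmaps hx).2, hout y hy]
  · have hxa : x < a := by
      simp only [mem_Icc, not_and_or, not_le] at hx
      exact hx.resolve_right (by linarith [hy.2])
    linarith [(hmaps hy).1, hout x hx]
  · rwa [hout x hx, hout y hy]

theorem HasDerivWithinAt.of_local_left_inverse {f g : ℝ → ℝ} {f' a : ℝ} {s t : Set ℝ}
    (hg : Tendsto g (𝓝[s] a) (𝓝[t] (g a))) (hf : HasDerivWithinAt f f' t (g a)) (hf' : f' ≠ 0)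
    (ha : a ∈ s) (hfg : ∀ᶠ y in 𝓝[s] a, f (g y) = y) : HasDerivWithinAt g f'⁻¹ s a :=
  HasFDerivWithinAt.of_local_left_inverse
    (f' := ContinuousLinearEquiv.unitsEquivAut ℝ (Units.mk0 f' hf')) hg hf ha hfg

namespace DiffOnIcc

variable {f P : Equiv.Perm ℝ}

lemma apply_of_notMem (hf : DiffOnIcc f) : ∀ x ∉ Icc (0:ℝ) 1, f x = x := hf.1
lemma mapsTo (hf : DiffOnIcc f) : MapsTo f (Icc (0:ℝ) 1) (Icc (0:ℝ) 1) := hf.2.1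
lemma contDiffOn (hf : DiffOnIcc f) : ContDiffOn ℝ 1 f (Icc (0:ℝ) 1) := hf.2.2.2.1
lemma contDiffOn_symm (hf : DiffOnIcc f) : ContDiffOn ℝ 1 f.symm (Icc (0:ℝ) 1) := hf.2.2.2.2.1
lemma D_pos (hf : DiffOnIcc f) : ∀ x ∈ Icc (0:ℝ) 1, 0 < D f x := hf.2.2.2.2.2

lemma symm_mapsTo (hf : DiffOnIcc f) : MapsTo f.symm (Icc (0:ℝ) 1) (Icc (0:ℝ) 1) :=
  Equiv.Perm.mapsTo_of_forall_notMem_apply_eq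
    (Equiv.Perm.symm_apply_eq_of_apply_eq hf.apply_of_notMem)

lemma strictMono (hf : DiffOnIcc f) : StrictMono f :=
  strictMono_of_strictMonoOn_Icc hf.apply_of_notMem hf.2.2.1

lemma continuous (hf : DiffOnIcc f) : Continuous f :=
  hf.strictMono.monotone.continuous_of_surjective f.surjective

lemma differentiableWithinAt (hf : DiffOnIcc f) {x : ℝ} (hx : x ∈ Icc (0:ℝ) 1) :
    DifferentiableWithinAt ℝ f (Icc (0:ℝ) 1) x :=
  hf.contDiffOn.differentiableOn one_ne_zero x hx

lemma continuousOn_D (hf : DiffOnIcc f) : ContinuousOn (D f) (Icc (0:ℝ) 1) :=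
  hf.contDiffOn.continuousOn_derivWithin uniqueDiffOn_Icc_zero_one le_rfl

lemma D_conj_apply (hP : DiffOnIcc P) (hf : DiffOnIcc f) {x : ℝ} (hx : x ∈ Icc (0:ℝ) 1) :
    D (P * f * P⁻¹) (P x) = D P (f x) * D f x / D P x := by
  have hconj : DifferentiableWithinAt ℝ (P * f * P⁻¹) (Icc (0:ℝ) 1) (P x) :=
    (hP.contDiffOn.comp (hf.contDiffOn.comp hP.contDiffOn_symm hP.symm_mapsTo)
      (hf.mapsTo.comp hP.symm_mapsTo)).differentiableOn one_ne_zero _ (hP.mapsTo hx)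
  have hcomp : ⇑(P * f * P⁻¹) ∘ P = P ∘ f := by ext; simp
  have hchain := derivWithin_comp x hconj (hP.differentiableWithinAt hx) hP.mapsTo
  rw [hcomp, derivWithin_comp x (hP.differentiableWithinAt (hf.mapsTo hx))
    (hf.differentiableWithinAt hx) hf.mapsTo] at hchain
  rw [eq_div_iff (hP.D_pos x hx).ne']
  exact hchain.symm

end DiffOnIcc

lemma DiffOnIcc.of_strictMono {f : Equiv.Perm ℝ} (hout : ∀ x ∉ Icc (0:ℝ) 1, f x = x)
    (hmono : StrictMono f) (hcd : ContDiffOn ℝ 1 f (Icc (0:ℝ) 1))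
    (hpos : ∀ x ∈ Icc (0:ℝ) 1, 0 < D f x) : DiffOnIcc f := by
  have hmaps_symm : MapsTo f.symm (Icc (0:ℝ) 1) (Icc (0:ℝ) 1) :=
    Equiv.Perm.mapsTo_of_forall_notMem_apply_eq (Equiv.Perm.symm_apply_eq_of_apply_eq hout)
  have hcont_symm : Continuous f.symm := by
    refine Monotone.continuous_of_surjective (fun a b hab ↦ ?_) f.symm.surjective
    rwa [← hmono.le_iff_le, f.apply_symm_apply, f.apply_symm_apply]
  have hderiv_symm (y : ℝ) (hy : y ∈ Icc (0:ℝ) 1) :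
      HasDerivWithinAt f.symm (D f (f.symm y))⁻¹ (Icc (0:ℝ) 1) y :=
    .of_local_left_inverse (hcont_symm.continuousWithinAt.tendsto_nhdsWithin hmaps_symm)
      (hcd.differentiableOn one_ne_zero _ (hmaps_symm hy)).hasDerivWithinAt
      (hpos _ (hmaps_symm hy)).ne' hy (.of_forall f.apply_symm_apply)
  refine ⟨hout, Equiv.Perm.mapsTo_of_forall_notMem_apply_eq hout, hmono.strictMonoOn _, hcd,
    ?_, hpos⟩
  rw [contDiffOn_one_iff_derivWithin uniqueDiffOn_Icc_zero_one]
  refine ⟨fun y hy ↦ (hderiv_symm y hy).differentiableWithinAt, ?_⟩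
  refine ContinuousOn.congr ?_
    fun y hy ↦ (hderiv_symm y hy).derivWithin (uniqueDiffOn_Icc_zero_one y hy)
  exact ((hcd.continuousOn_derivWithin uniqueDiffOn_Icc_zero_one le_rfl).comp
    hcont_symm.continuousOn hmaps_symm).inv₀ fun y hy ↦ (hpos _ (hmaps_symm hy)).ne'

section ConvexCombination

variable {A B : Equiv.Perm ℝ} {s : ℝ}

lemma StrictMono.convex_combination {φ ψ : ℝ → ℝ} (hφ : StrictMono φ) (hψ : StrictMono ψ)
    (hs : s ∈ Icc (0:ℝ) 1) : StrictMono fun x ↦ (1 - s) * φ x + s * ψ x := by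
  rcases hs.2.lt_or_eq with hs1 | rfl
  · exact (hφ.const_mul (sub_pos.2 hs1)).add_monotone (hψ.monotone.const_mul hs.1)
  · simpa using hψ

lemma convex_combination_pos (hs : s ∈ Icc (0:ℝ) 1) {a b : ℝ} (ha : 0 < a) (hb : 0 < b) :
    0 < (1 - s) * a + s * b :=
  convex_Ioi (0:ℝ) ha hb (sub_nonneg.2 hs.2) hs.1 (by ring)

lemma bijective_convex_combination (hA : DiffOnIcc A) (hB : DiffOnIcc B) (hs : s ∈ Icc (0:ℝ) 1) :
    Function.Bijective fun x ↦ (1 - s) * A x + s * B x := by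
  have hout (x : ℝ) (hx : x ∉ Icc (0:ℝ) 1) : x = (1 - s) * A x + s * B x := by
    rw [hA.apply_of_notMem x hx, hB.apply_of_notMem x hx]; ring
  refine ⟨(hA.strictMono.convex_combination hB.strictMono hs).injective, ?_⟩
  refine ((continuous_const.mul hA.continuous).add (continuous_const.mul hB.continuous)).surjective
    (tendsto_id.congr' ?_) (tendsto_id.congr' ?_)
  · filter_upwards [eventually_gt_atTop 1] with x hx using hout x fun h ↦ by linarith [h.2]
  · filter_upwards [eventually_lt_atBot 0] with x hx using hout x fun h ↦ by linarith [h.1]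

def mixPerm (A B : Equiv.Perm ℝ) (s : ℝ) (hA : DiffOnIcc A) (hB : DiffOnIcc B)
    (hs : s ∈ Icc (0:ℝ) 1) : Equiv.Perm ℝ :=
  Equiv.ofBijective _ (bijective_convex_combination hA hB hs)

variable (hA : DiffOnIcc A) (hB : DiffOnIcc B) (hs : s ∈ Icc (0:ℝ) 1)

lemma mixPerm_apply (x : ℝ) : mixPerm A B s hA hB hs x = (1 - s) * A x + s * B x := rfl

lemma D_mixPerm {x : ℝ} (hx : x ∈ Icc (0:ℝ) 1) :
    D (mixPerm A B s hA hB hs) x = (1 - s) * D A x + s * D B x :=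
  (((hA.differentiableWithinAt hx).hasDerivWithinAt.const_mul (1 - s)).add
    ((hB.differentiableWithinAt hx).hasDerivWithinAt.const_mul s)).derivWithin
    (uniqueDiffOn_Icc_zero_one x hx)

lemma DiffOnIcc.mixPerm : DiffOnIcc (mixPerm A B s hA hB hs) := by
  refine .of_strictMono (fun x hx ↦ ?_) (hA.strictMono.convex_combination hB.strictMono hs)
    ((contDiffOn_const.mul hA.contDiffOn).add (contDiffOn_const.mul hB.contDiffOn))
    fun x hx ↦ ?_
  · rw [mixPerm_apply, hA.apply_of_notMem x hx, hB.apply_of_notMem x hx]; ring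
  · rw [D_mixPerm hA hB hs hx]
    exact convex_combination_pos hs (hA.D_pos x hx) (hB.D_pos x hx)

end ConvexCombination

def C1CloseToId (ε : ℝ) (f : Equiv.Perm ℝ) : Prop :=
  ∀ x ∈ Icc (0:ℝ) 1, |f x - x| < ε ∧ |D f x - 1| < ε

lemma c1CloseToId_conj_iff {P f : Equiv.Perm ℝ} {ε : ℝ} (hP : DiffOnIcc P) (hf : DiffOnIcc f) :
    C1CloseToId ε (P * f * P⁻¹) ↔
      ∀ x ∈ Icc (0:ℝ) 1, |P (f x) - P x| < ε ∧ |D P (f x) * D f x / D P x - 1| < ε := by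
  refine ⟨fun h x hx ↦ ?_, fun h y hy ↦ ?_⟩
  · simpa [hP.D_conj_apply hf hx] using h (P x) (hP.mapsTo hx)
  · obtain ⟨x, hx, rfl⟩ : ∃ x ∈ Icc (0:ℝ) 1, P x = y :=
      ⟨P.symm y, hP.symm_mapsTo hy, P.apply_symm_apply y⟩
    simpa [hP.D_conj_apply hf hx] using h x hx

/-- Conjugating by a convex combination of `A` and `B` moves points by a convex combination of the
displacements under `A`- and `B`-conjugation, and its derivative is a weighted mean of theirs. -/
lemma C1CloseToId.conj_mixPerm {A B f : Equiv.Perm ℝ} {s ε : ℝ} (hA : DiffOnIcc A)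
    (hB : DiffOnIcc B) (hs : s ∈ Icc (0:ℝ) 1) (hf : DiffOnIcc f)
    (hAf : C1CloseToId ε (A * f * A⁻¹)) (hBf : C1CloseToId ε (B * f * B⁻¹)) :
    C1CloseToId ε (mixPerm A B s hA hB hs * f * (mixPerm A B s hA hB hs)⁻¹) := by
  rw [c1CloseToId_conj_iff hA hf] at hAf
  rw [c1CloseToId_conj_iff hB hf] at hBf
  rw [c1CloseToId_conj_iff (.mixPerm hA hB hs) hf]
  intro x hx
  obtain ⟨hAv, hAd⟩ := hAf x hx
  obtain ⟨hBv, hBd⟩ := hBf x hx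
  have ha := hA.D_pos x hx
  have hb := hB.D_pos x hx
  constructor
  · rw [← Real.norm_eq_abs, ← mem_ball_zero_iff]
    convert convex_ball (0:ℝ) ε (mem_ball_zero_iff.2 hAv) (mem_ball_zero_iff.2 hBv)
      (sub_nonneg.2 hs.2) hs.1 (by ring) using 1
    simp only [mixPerm_apply, smul_eq_mul]
    ring
  · simp only [← Real.dist_eq, ← Metric.mem_ball] at hAd hBd ⊢
    have hW := convex_combination_pos hs ha hb
    convert convex_iff_div.1 (convex_ball (1:ℝ) ε) hAd hBd
      (mul_nonneg (sub_nonneg.2 hs.2) ha.le) (mul_nonneg hs.1 hb.le) hW using 1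
    rw [D_mixPerm hA hB hs (hf.mapsTo hx), D_mixPerm hA hB hs hx, smul_eq_mul, smul_eq_mul]
    field_simp

/-- The sup-distance of jets is the C¹ distance. -/
def jet (f : Equiv.Perm ℝ) (hf : DiffOnIcc f) : C(Icc (0:ℝ) 1, ℝ × ℝ) :=
  ⟨fun x ↦ (f x, D f x), (hf.continuous.continuousOn.prodMk hf.continuousOn_D).domRestrict⟩

@[simp]
lemma jet_apply (f : Equiv.Perm ℝ) (hf : DiffOnIcc f) (x : Icc (0:ℝ) 1) :
    jet f hf x = (f x, D f x) := rfl

lemma abs_sub_lt_of_dist_jet_lt {f g : Equiv.Perm ℝ} {hf : DiffOnIcc f} {hg : DiffOnIcc g}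
    {ε : ℝ} (h : dist (jet f hf) (jet g hg) < ε) {x : ℝ} (hx : x ∈ Icc (0:ℝ) 1) :
    |f x - g x| < ε ∧ |D f x - D g x| < ε := by
  have := (ContinuousMap.dist_apply_le_dist ⟨x, hx⟩).trans_lt h
  rwa [Prod.dist_eq, max_lt_iff, Real.dist_eq, Real.dist_eq] at this

lemma jet_mixPerm {A B : Equiv.Perm ℝ} {s : ℝ} (hA : DiffOnIcc A) (hB : DiffOnIcc B)
    (hs : s ∈ Icc (0:ℝ) 1) :
    jet (mixPerm A B s hA hB hs) (.mixPerm hA hB hs) =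
      AffineMap.lineMap (jet A hA) (jet B hB) s := by
  ext x
  · simp [AffineMap.lineMap_apply, mixPerm_apply]
    ring
  · simp [AffineMap.lineMap_apply, D_mixPerm hA hB hs x.2]
    ring

section Interpolation

variable {E : Type*} [AddCommGroup E] [Module ℝ E]

def interpolate (a : ℤ → E) (τ : ℝ) : E :=
  AffineMap.lineMap (a ⌊τ⌋) (a (⌊τ⌋ + 1)) (Int.fract τ)

lemma interpolate_eqOn_Icc (a : ℤ → E) (m : ℤ) :
    EqOn (interpolate a) (fun τ ↦ AffineMap.lineMap (a m) (a (m + 1)) (τ - m)) (Icc m (m + 1)) := by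
  intro τ hτ
  rcases hτ.2.lt_or_eq with hlt | rfl
  · simp [interpolate, Int.fract, Int.floor_eq_iff.2 ⟨hτ.1, hlt⟩]
  · simp [interpolate]

lemma continuous_interpolate [TopologicalSpace E] [IsTopologicalAddGroup E] [ContinuousSMul ℝ E]
    (a : ℤ → E) : Continuous (interpolate a) := by
  have hcover : LocallyFinite fun m : ℤ ↦ Icc (m : ℝ) (m + 1) :=
    locallyFinite_Icc_of_tendsto tendsto_intCast_atTop_atTop
      (tendsto_atBot_add_const_right _ _ (tendsto_intCast_atBot_iff.2 tendsto_id))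
  refine hcover.continuous ?_ (fun _ ↦ isClosed_Icc) fun m ↦ ?_
  · exact eq_univ_of_forall fun τ ↦
      mem_iUnion.2 ⟨⌊τ⌋, Int.floor_le τ, (Int.lt_floor_add_one τ).le⟩
  · exact (AffineMap.lineMap_continuous.comp (continuous_id.sub continuous_const)).continuousOn
      |>.congr (interpolate_eqOn_Icc a m)

end Interpolation

section InterpolatePerm

variable (h : ℤ → Equiv.Perm ℝ) (hh : ∀ m, DiffOnIcc (h m))

def interpolatePerm (τ : ℝ) : Equiv.Perm ℝ :=
  mixPerm (h ⌊τ⌋) (h (⌊τ⌋ + 1)) (Int.fract τ) (hh _) (hh _)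
    ⟨Int.fract_nonneg τ, (Int.fract_lt_one τ).le⟩

lemma DiffOnIcc.interpolatePerm (τ : ℝ) : DiffOnIcc (interpolatePerm h hh τ) := .mixPerm _ _ _

lemma jet_interpolatePerm (τ : ℝ) :
    jet (interpolatePerm h hh τ) (.interpolatePerm h hh τ) =
      interpolate (fun m ↦ jet (h m) (hh m)) τ :=
  jet_mixPerm _ _ _

lemma continuous_jet_interpolatePerm :
    Continuous fun τ ↦ jet (interpolatePerm h hh τ) (.interpolatePerm h hh τ) :=
  (continuous_interpolate _).congr fun τ ↦ (jet_interpolatePerm h hh τ).symm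

variable {h} {f : Equiv.Perm ℝ} {ε : ℝ}

lemma C1CloseToId.conj_interpolatePerm (hf : DiffOnIcc f) {N : ℤ}
    (hN : ∀ m ≥ N, C1CloseToId ε (h m * f * (h m)⁻¹)) {τ : ℝ} (hτ : N ≤ τ) :
    C1CloseToId ε (interpolatePerm h hh τ * f * (interpolatePerm h hh τ)⁻¹) :=
  .conj_mixPerm _ _ _ hf (hN _ (Int.le_floor.2 hτ)) (hN _ (by linarith [Int.le_floor.2 hτ]))

end InterpolatePerm

/-- a sequence of conjugacies bringing `G` to the identity can be
replaced by a C¹-continuous path of conjugacies. -/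
theorem stmt3 (G : Subgroup (Equiv.Perm ℝ)) (hG : ∀ g ∈ G, DiffOnIcc g)
    (h : ℕ → Equiv.Perm ℝ) (hdiff : ∀ n, DiffOnIcc (h n))
    (hconv : ∀ g ∈ G, ∀ ε > (0:ℝ), ∃ N : ℕ, ∀ n ≥ N, ∀ x ∈ Icc (0:ℝ) 1,
      |(h n * g * (h n)⁻¹) x - x| < ε ∧ |D (h n * g * (h n)⁻¹) x - 1| < ε) :
    ∃ H : ℝ → Equiv.Perm ℝ,
      (∀ t ∈ Ico (0:ℝ) 1, DiffOnIcc (H t)) ∧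
      (∀ t₀ ∈ Ico (0:ℝ) 1, ∀ ε > (0:ℝ), ∃ δ > (0:ℝ), ∀ t ∈ Ico (0:ℝ) 1, |t - t₀| < δ →
        ∀ x ∈ Icc (0:ℝ) 1, |H t x - H t₀ x| < ε ∧ |D (H t) x - D (H t₀) x| < ε) ∧
      (∀ g ∈ G, ∀ ε > (0:ℝ), ∃ t₀ ∈ Ico (0:ℝ) 1, ∀ t ∈ Ico (0:ℝ) 1, t₀ ≤ t →
        ∀ x ∈ Icc (0:ℝ) 1, |(H t * g * (H t)⁻¹) x - x| < ε ∧
          |D (H t * g * (H t)⁻¹) x - 1| < ε) := by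
  have hdiff' (m : ℤ) : DiffOnIcc (h m.toNat) := hdiff _
  let H (t : ℝ) := interpolatePerm (fun m ↦ h m.toNat) hdiff' (t / (1 - t))
  refine ⟨H, fun t _ ↦ .interpolatePerm _ hdiff' _, fun t₀ ht₀ ε hε ↦ ?_, fun g hg ε hε ↦ ?_⟩
  · have hcont : ContinuousOn (fun t ↦ jet (H t) (.interpolatePerm _ hdiff' _)) (Ico 0 1) :=
      (continuous_jet_interpolatePerm _ hdiff').comp_continuousOn
        (continuousOn_id.div (continuousOn_const.sub continuousOn_id)
          fun t ht ↦ (sub_pos.2 ht.2).ne')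
    obtain ⟨δ, hδ, hδε⟩ := Metric.continuousOn_iff.1 hcont t₀ ht₀ ε hε
    exact ⟨δ, hδ, fun t ht htt₀ _ hx ↦
      abs_sub_lt_of_dist_jet_lt (hδε t ht (by rwa [Real.dist_eq])) hx⟩
  · obtain ⟨N, hN⟩ := hconv g hg ε hε
    have hN1 : (0:ℝ) < N + 1 := by positivity
    refine ⟨N / (N + 1), ⟨by positivity, (div_lt_one hN1).2 (lt_add_one _)⟩, fun t ht htN ↦ ?_⟩
    refine C1CloseToId.conj_interpolatePerm hdiff' (hG g hg) (N := N)
      (fun m hm ↦ hN _ (by omega)) ?_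
    rw [div_le_iff₀ hN1] at htN
    rw [Int.cast_natCast, le_div_iff₀ (sub_pos.2 ht.2)]
    linarith
end
end

section
/- Let (G_n) be an increasing sequence of subgroups of Diff^1_+([0,1]), each finitely generated and C^1-close to the identity. Then the union G = ⋃_n G_n is C^1-close to the identity. -/
open Set Filter

noncomputable section

/-- `G` is C¹-close to the identity: some sequence of conjugacies brings every
element of `G` to the identity in the C¹ topology. -/
def C1CloseId (G : Subgroup (Equiv.Perm ℝ)) : Prop :=
  ∃ h : ℕ → Equiv.Perm ℝ, (∀ n, DiffOnIcc (h n)) ∧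
    ∀ g ∈ G, ∀ ε > (0:ℝ), ∃ N : ℕ, ∀ n ≥ N, ∀ x ∈ Icc (0:ℝ) 1,
      |(h n * g * (h n)⁻¹) x - x| < ε ∧ |D (h n * g * (h n)⁻¹) x - 1| < ε

/-!
Being C¹-close to the identity is a statement about sequences, but for a countable group it
reduces, by a diagonal argument, to a finitary one: every finite subset can be conjugated
simultaneously into any C¹-neighbourhood of the identity. The finitary property passes to
directed unions, since a finite subset of such a union lies in one member, and an increasing
union of finitely generated groups is countable.
-/

theorem Subgroup.FG.countable {α : Type*} [Group α] {H : Subgroup α} (hH : H.FG) :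
    (H : Set α).Countable := by
  obtain ⟨S, rfl⟩ := hH
  rw [FreeGroup.closure_eq_range, MonoidHom.coe_range]
  exact countable_range _

def ConjC1Close (h g : Equiv.Perm ℝ) (ε : ℝ) : Prop :=
  ∀ x ∈ Icc (0:ℝ) 1, |(h * g * h⁻¹) x - x| < ε ∧ |D (h * g * h⁻¹) x - 1| < ε

theorem ConjC1Close.mono {h g : Equiv.Perm ℝ} {ε δ : ℝ} (hc : ConjC1Close h g ε) (hεδ : ε ≤ δ) :
    ConjC1Close h g δ := fun x hx =>
  ⟨(hc x hx).1.trans_le hεδ, (hc x hx).2.trans_le hεδ⟩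

def FinitelyC1CloseId (G : Subgroup (Equiv.Perm ℝ)) : Prop :=
  ∀ s : Finset (Equiv.Perm ℝ), (s : Set (Equiv.Perm ℝ)) ⊆ G → ∀ ε > (0:ℝ),
    ∃ h, DiffOnIcc h ∧ ∀ g ∈ s, ConjC1Close h g ε

theorem C1CloseId.finitelyC1CloseId {G : Subgroup (Equiv.Perm ℝ)} (hG : C1CloseId G) :
    FinitelyC1CloseId G := by
  obtain ⟨h, hdiff, hconv⟩ := hG
  intro s hs ε hε
  have hev : ∀ᶠ n in atTop, ∀ g ∈ s, ConjC1Close (h n) g ε :=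
    (eventually_all_finset s).2 fun g hg => eventually_atTop.2 (hconv g (hs hg) ε hε)
  obtain ⟨n, hn⟩ := hev.exists
  exact ⟨h n, hdiff n, hn⟩

theorem finitelyC1CloseId_iSup {ι : Type*} [Nonempty ι] {G : ι → Subgroup (Equiv.Perm ℝ)}
    (hdir : Directed (· ≤ ·) G) (hG : ∀ i, FinitelyC1CloseId (G i)) :
    FinitelyC1CloseId (⨆ i, G i) := by
  intro s hs ε hε
  rw [Subgroup.coe_iSup_of_directed hdir] at hs
  have hdir' : Directed (· ⊆ ·) fun i => (G i : Set (Equiv.Perm ℝ)) :=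
    hdir.mono_comp (· ≤ ·) fun _ _ h => h
  obtain ⟨i, hi⟩ := hdir'.exists_mem_subset_of_finset_subset_biUnion hs
  exact hG i s hi ε hε

/-- The diagonal argument: the `m`-th conjugacy handles the first `m + 1` elements of an
enumeration of `G` up to `1 / (m + 1)`. -/
theorem FinitelyC1CloseId.c1CloseId {G : Subgroup (Equiv.Perm ℝ)}
    (hcount : (G : Set (Equiv.Perm ℝ)).Countable) (hG : FinitelyC1CloseId G) : C1CloseId G := by
  classical
  obtain ⟨e, he⟩ := hcount.exists_eq_range ⟨1, G.one_mem⟩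
  have hsub : ∀ m : ℕ, ((Finset.range (m + 1)).image e : Set (Equiv.Perm ℝ)) ⊆ G := by
    intro m
    rw [Finset.coe_image, he]
    exact image_subset_range _ _
  choose h hdiff hclose using fun m : ℕ => hG _ (hsub m) (1 / (m + 1)) (by positivity)
  refine ⟨h, hdiff, ?_⟩
  rintro g hg ε hε
  obtain ⟨k, rfl⟩ : g ∈ range e := he ▸ hg
  obtain ⟨N, hN⟩ := exists_nat_one_div_lt hε
  refine ⟨max k N, fun n hn => ?_⟩
  have hk : e k ∈ (Finset.range (n + 1)).image e :=
    Finset.mem_image_of_mem e (Finset.mem_range.2 (by omega))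
  have hεn : 1 / ((n : ℝ) + 1) ≤ ε := by
    refine le_trans ?_ hN.le
    gcongr
    exact_mod_cast le_of_max_le_right hn
  exact (hclose n (e k) hk).mono hεn

theorem stmt4_general (G : ℕ → Subgroup (Equiv.Perm ℝ))
    (hmono : ∀ n, G n ≤ G (n+1))
    (hfg : ∀ n, (G n).FG)
    (hclose : ∀ n, C1CloseId (G n)) :
    C1CloseId (⨆ n, G n) := by
  have hdir : Directed (· ≤ ·) G := (monotone_nat_of_le_succ hmono).directed_le
  have hcount : ((⨆ n, G n : Subgroup (Equiv.Perm ℝ)) : Set (Equiv.Perm ℝ)).Countable := by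
    rw [Subgroup.coe_iSup_of_directed hdir]
    exact countable_iUnion fun n => (hfg n).countable
  exact (finitelyC1CloseId_iSup hdir fun n => (hclose n).finitelyC1CloseId).c1CloseId hcount

/-- an increasing union of finitely generated groups C¹-close to the
identity is C¹-close to the identity. -/
theorem stmt4 (G : ℕ → Subgroup (Equiv.Perm ℝ))
    (hdiff : ∀ n, ∀ g ∈ G n, DiffOnIcc g)
    (hmono : ∀ n, G n ≤ G (n+1))
    (hfg : ∀ n, (G n).FG)
    (hclose : ∀ n, C1CloseId (G n)) :
    C1CloseId (⨆ n, G n) :=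
  stmt4_general G hmono hfg hclose
end
end

section
/- A group G ⊂ Homeo_+([0,1]) is without crossing if and only if it is without linked fixed points. -/
open Set Filter

noncomputable section

/-- Two pairs of successive fixed points are linked if one of the open intervals
contains exactly one endpoint of the other pair. -/
def LinkedPairs (a b c d : ℝ) : Prop :=
  (∃! x, x ∈ ({c, d} : Set ℝ) ∩ Ioo a b) ∨ (∃! x, x ∈ ({a, b} : Set ℝ) ∩ Ioo c d)

/-! Both properties say that whenever `{a,b}` and `{c,d}` are pairs of successive fixed points, the
interval `(a,b)` contains both or neither of `c`, `d`.

Without crossing, suppose `c ∈ (a,b)` but `b ≤ d`: one of `f^{±1}` (where `(a,b)` is a component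
of `f`) moves `c` to the right, staying in `(a,b)`, hence into `(c,d)`, which is a crossing.

Conversely, if `g` moved an endpoint, say `a`, of a component `(a,b)` of `f` into `(a,b)`, then the
component of `g` through `a` would contain `b` as well, so `g` would push `a` and `b` the same way
(the sign of `g x - x` is constant on a component), and `(g a, g b)`, a component of `g f g⁻¹`,
would contain `g a` but not `g b`. -/

namespace HomeoOnIcc

variable {f : Equiv.Perm ℝ}

lemma symm_mapsTo (hf : HomeoOnIcc f) : MapsTo f.symm (Icc 0 1) (Icc 0 1) := by
  intro y hy
  by_contra h
  have hfix : y = f.symm y := by simpa using hf.1 _ h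
  exact h (hfix ▸ hy)

lemma lt_symm_apply_iff (hf : HomeoOnIcc f) {x y : ℝ} (hx : x ∈ Icc 0 1) (hy : y ∈ Icc 0 1) :
    x < f.symm y ↔ f x < y := by
  conv_rhs => rw [← f.apply_symm_apply y]
  exact (hf.2.2.1.lt_iff_lt hx (hf.symm_mapsTo hy)).symm

lemma symm_apply_lt_iff (hf : HomeoOnIcc f) {x y : ℝ} (hx : x ∈ Icc 0 1) (hy : y ∈ Icc 0 1) :
    f.symm y < x ↔ y < f x := by
  conv_rhs => rw [← f.apply_symm_apply y]
  exact (hf.2.2.1.lt_iff_lt (hf.symm_mapsTo hy) hx).symm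

lemma apply_zero (hf : HomeoOnIcc f) : f 0 = 0 := by
  have h0 : (0 : ℝ) ∈ Icc 0 1 := left_mem_Icc.2 zero_le_one
  have hx := hf.symm_mapsTo h0
  refine le_antisymm ?_ (hf.2.1 h0).1
  calc f 0 ≤ f (f.symm 0) := hf.2.2.1.monotoneOn h0 hx hx.1
    _ = 0 := f.apply_symm_apply 0

lemma apply_one (hf : HomeoOnIcc f) : f 1 = 1 := by
  have h1 : (1 : ℝ) ∈ Icc 0 1 := right_mem_Icc.2 zero_le_one
  have hx := hf.symm_mapsTo h1
  refine le_antisymm (hf.2.1 h1).2 ?_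
  calc 1 = f (f.symm 1) := (f.apply_symm_apply 1).symm
    _ ≤ f 1 := hf.2.2.1.monotoneOn hx h1 hx.2

lemma exists_isCompFix_mem_Ioo (hf : HomeoOnIcc f) {x : ℝ} (hx : x ∈ Icc 0 1) (hfx : f x ≠ x) :
    ∃ c d, IsCompFix f c d ∧ x ∈ Ioo c d := by
  set S : Set ℝ := Icc 0 1 ∩ (fun y => f y - y) ⁻¹' {0}
  have hS : ∀ y, y ∈ S ↔ y ∈ Icc 0 1 ∧ f y = y := fun y => by simp [S, sub_eq_zero]
  have hSclosed : IsClosed S :=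
    (hf.2.2.2.sub continuousOn_id).preimage_isClosed_of_isClosed isClosed_Icc isClosed_singleton
  have hbelow : BddAbove (S ∩ Iic x) := ⟨x, fun y hy => hy.2⟩
  have habove : BddBelow (S ∩ Ici x) := ⟨x, fun y hy => hy.2⟩
  have hc := (hSclosed.inter isClosed_Iic).csSup_mem
    ⟨0, (hS 0).2 ⟨left_mem_Icc.2 zero_le_one, hf.apply_zero⟩, hx.1⟩ hbelow
  have hd := (hSclosed.inter isClosed_Ici).csInf_mem
    ⟨1, (hS 1).2 ⟨right_mem_Icc.2 zero_le_one, hf.apply_one⟩, hx.2⟩ habove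
  obtain ⟨hcI, hfc⟩ := (hS _).1 hc.1
  obtain ⟨hdI, hfd⟩ := (hS _).1 hd.1
  have hcx : sSup (S ∩ Iic x) < x := hc.2.lt_of_ne fun h => hfx (h ▸ hfc)
  have hxd : x < sInf (S ∩ Ici x) := hd.2.lt_of_ne' fun h => hfx (h ▸ hfd)
  refine ⟨_, _, ⟨hcI, hdI, hcx.trans hxd, hfc, hfd, fun y hy hfy => ?_⟩, hcx, hxd⟩
  have hyS : y ∈ S := (hS y).2 ⟨⟨hcI.1.trans hy.1.le, hy.2.le.trans hdI.2⟩, hfy⟩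
  rcases le_total y x with hyx | hxy
  · exact (le_csSup hbelow ⟨hyS, hyx⟩).not_gt hy.1
  · exact (csInf_le habove ⟨hyS, hxy⟩).not_gt hy.2

end HomeoOnIcc

namespace IsCompFix

variable {f g : Equiv.Perm ℝ} {a b : ℝ}

lemma Ioo_subset (hab : IsCompFix f a b) : Ioo a b ⊆ Icc 0 1 :=
  Ioo_subset_Icc_self.trans (Icc_subset_Icc hab.1.1 hab.2.1.2)

lemma mapsTo_Ioo (hf : HomeoOnIcc f) (hab : IsCompFix f a b) : MapsTo f (Ioo a b) (Ioo a b) := by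
  intro x hx
  have hxI := hab.Ioo_subset hx
  obtain ⟨ha, hb, -, hfa, hfb, -⟩ := hab
  exact ⟨hfa ▸ hf.2.2.1 ha hxI hx.1, hfb ▸ hf.2.2.1 hxI hb hx.2⟩

lemma inv (hab : IsCompFix f a b) : IsCompFix f⁻¹ a b := by
  obtain ⟨ha, hb, hlt, hfa, hfb, hfix⟩ := hab
  exact ⟨ha, hb, hlt, Equiv.Perm.inv_eq_iff_eq.2 hfa.symm, Equiv.Perm.inv_eq_iff_eq.2 hfb.symm,
    fun x hx h => hfix x hx (Equiv.Perm.inv_eq_iff_eq.1 h).symm⟩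

lemma conj (hg : HomeoOnIcc g) (hab : IsCompFix f a b) : IsCompFix (g * f * g⁻¹) (g a) (g b) := by
  obtain ⟨ha, hb, hlt, hfa, hfb, hfix⟩ := hab
  have happly : ∀ x, (g * f * g⁻¹) x = g (f (g.symm x)) := fun _ => rfl
  refine ⟨hg.2.1 ha, hg.2.1 hb, hg.2.2.1 ha hb hlt, by simp [happly, hfa], by simp [happly, hfb],
    fun y hy hfy => ?_⟩
  have hyI : y ∈ Icc 0 1 :=
    Ioo_subset_Icc_self.trans (Icc_subset_Icc (hg.2.1 ha).1 (hg.2.1 hb).2) hy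
  have hx : g.symm y ∈ Ioo a b :=
    ⟨(hg.lt_symm_apply_iff ha hyI).2 hy.1, (hg.symm_apply_lt_iff hb hyI).2 hy.2⟩
  refine hfix _ hx (g.injective ?_)
  rw [← happly, hfy, g.apply_symm_apply]

lemma lt_apply_iff (hf : HomeoOnIcc f) (hab : IsCompFix f a b) {x y : ℝ} (hx : x ∈ Ioo a b)
    (hy : y ∈ Ioo a b) : x < f x ↔ y < f y := by
  have hcont : ContinuousOn f (Ioo a b) := hf.2.2.2.mono hab.Ioo_subset
  have key : ∀ {x y}, x ∈ Ioo a b → y ∈ Ioo a b → x < f x → y < f y := by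
    intro x y hx hy hxf
    by_contra hyf
    obtain ⟨z, hz, hfz⟩ := isPreconnected_Ioo.intermediate_value₂ hy hx hcont continuousOn_id
      (not_lt.1 hyf) hxf.le
    exact hab.2.2.2.2.2 z hz hfz
  exact ⟨key hx hy, key hy hx⟩

end IsCompFix

section Group

variable {G : Subgroup (Equiv.Perm ℝ)} {a b c d x : ℝ}

def WithoutCrossing (G : Subgroup (Equiv.Perm ℝ)) : Prop :=
  ∀ f ∈ G, ∀ g ∈ G, ∀ a b : ℝ, IsCompFix f a b → g a ∉ Ioo a b ∧ g b ∉ Ioo a b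

def WithoutLinkedFixedPoints (G : Subgroup (Equiv.Perm ℝ)) : Prop :=
  ∀ a b c d : ℝ, SuccFix G a b → SuccFix G c d → ¬ LinkedPairs a b c d

lemma existsUnique_mem_pair_inter_iff {α : Type*} {s : Set α} {c d : α} (hcd : c ≠ d) :
    (∃! x, x ∈ ({c, d} : Set α) ∩ s) ↔ Xor (c ∈ s) (d ∈ s) := by
  by_cases hc : c ∈ s <;> by_cases hd : d ∈ s <;> simp [ExistsUnique, hc, hd, hcd, hcd.symm]

lemma withoutLinkedFixedPoints_iff : WithoutLinkedFixedPoints G ↔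
    ∀ a b c d, SuccFix G a b → SuccFix G c d → (c ∈ Ioo a b ↔ d ∈ Ioo a b) := by
  have linked_iff : ∀ {a b c d}, SuccFix G a b → SuccFix G c d → (LinkedPairs a b c d ↔
      Xor (c ∈ Ioo a b) (d ∈ Ioo a b) ∨ Xor (a ∈ Ioo c d) (b ∈ Ioo c d)) :=
    fun ⟨_, _, hab⟩ ⟨_, _, hcd⟩ => or_congr (existsUnique_mem_pair_inter_iff hcd.2.2.1.ne)
      (existsUnique_mem_pair_inter_iff hab.2.2.1.ne)
  refine ⟨fun H a b c d hab hcd => ?_, fun H a b c d hab hcd => ?_⟩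
  · by_contra h
    exact H a b c d hab hcd ((linked_iff hab hcd).2 (.inl ((xor_iff_not_iff _ _).2 h)))
  · rw [linked_iff hab hcd, xor_iff_not_iff, xor_iff_not_iff]
    exact fun h => h.elim (· (H a b c d hab hcd)) (· (H c d a b hcd hab))

lemma SuccFix.exists_lt_apply (hG : ∀ g ∈ G, HomeoOnIcc g) (hab : SuccFix G a b)
    (hx : x ∈ Ioo a b) : ∃ h ∈ G, IsCompFix h a b ∧ x < h x := by
  obtain ⟨f, hf, hab⟩ := hab
  rcases (hab.2.2.2.2.2 x hx).lt_or_gt with hfx | hxf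
  · have hxI := hab.Ioo_subset hx
    exact ⟨f⁻¹, inv_mem hf, hab.inv, ((hG f hf).lt_symm_apply_iff hxI hxI).2 hfx⟩
  · exact ⟨f, hf, hab, hxf⟩

lemma SuccFix.exists_apply_mem_Ioo_right (hG : ∀ g ∈ G, HomeoOnIcc g) (hab : SuccFix G a b)
    (hx : x ∈ Ioo a b) : ∃ h ∈ G, h x ∈ Ioo x b := by
  obtain ⟨h, hh, hab, hxh⟩ := hab.exists_lt_apply hG hx
  exact ⟨h, hh, hxh, (hab.mapsTo_Ioo (hG h hh) hx).2⟩

lemma SuccFix.exists_apply_mem_Ioo_left (hG : ∀ g ∈ G, HomeoOnIcc g) (hab : SuccFix G a b)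
    (hx : x ∈ Ioo a b) : ∃ h ∈ G, h x ∈ Ioo a x := by
  obtain ⟨h, hh, hab, hxh⟩ := hab.exists_lt_apply hG hx
  have hxI := hab.Ioo_subset hx
  refine ⟨h⁻¹, inv_mem hh, (hab.inv.mapsTo_Ioo (hG _ (inv_mem hh)) hx).1, ?_⟩
  exact ((hG h hh).symm_apply_lt_iff hxI hxI).2 hxh

namespace WithoutCrossing

lemma lt_right_of_left_mem_Ioo (hG : ∀ g ∈ G, HomeoOnIcc g) (H : WithoutCrossing G)
    (hab : SuccFix G a b) (hcd : SuccFix G c d) (hc : c ∈ Ioo a b) : d < b := by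
  obtain ⟨g, hg, hcd⟩ := hcd
  obtain ⟨h, hh, hhc⟩ := hab.exists_apply_mem_Ioo_right hG hc
  by_contra hbd
  exact (H g hg h hh c d hcd).1 ⟨hhc.1, hhc.2.trans_le (not_lt.1 hbd)⟩

lemma left_lt_of_right_mem_Ioo (hG : ∀ g ∈ G, HomeoOnIcc g) (H : WithoutCrossing G)
    (hab : SuccFix G a b) (hcd : SuccFix G c d) (hd : d ∈ Ioo a b) : a < c := by
  obtain ⟨g, hg, hcd⟩ := hcd
  obtain ⟨h, hh, hhd⟩ := hab.exists_apply_mem_Ioo_left hG hd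
  by_contra hca
  exact (H g hg h hh c d hcd).2 ⟨(not_lt.1 hca).trans_lt hhd.1, hhd.2⟩

lemma mem_Ioo_iff (hG : ∀ g ∈ G, HomeoOnIcc g) (H : WithoutCrossing G)
    (hab : SuccFix G a b) (hcd : SuccFix G c d) : c ∈ Ioo a b ↔ d ∈ Ioo a b := by
  have hlt : c < d := by obtain ⟨_, _, h⟩ := hcd; exact h.2.2.1
  exact ⟨fun hc => ⟨hc.1.trans hlt, H.lt_right_of_left_mem_Ioo hG hab hcd hc⟩,
    fun hd => ⟨H.left_lt_of_right_mem_Ioo hG hab hcd hd, hlt.trans hd.2⟩⟩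

end WithoutCrossing

lemma withoutCrossing_of_forall_mem_Ioo_iff (hG : ∀ g ∈ G, HomeoOnIcc g)
    (H : ∀ a b c d, SuccFix G a b → SuccFix G c d → (c ∈ Ioo a b ↔ d ∈ Ioo a b)) :
    WithoutCrossing G := by
  intro f hf g hg a b hab
  have hg' := hG g hg
  have hconj : SuccFix G (g a) (g b) :=
    ⟨g * f * g⁻¹, mul_mem (mul_mem hg hf) (inv_mem hg), hab.conj hg'⟩
  have hH := H a b (g a) (g b) ⟨f, hf, hab⟩ hconj
  constructor
  · intro ha
    obtain ⟨c, d, hcd, hacd⟩ := hg'.exists_isCompFix_mem_Ioo hab.1 ha.1.ne'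
    have hbcd : b ∈ Ioo c d := (H c d a b ⟨g, hg, hcd⟩ ⟨f, hf, hab⟩).1 hacd
    exact (hH.1 ha).2.not_gt ((hcd.lt_apply_iff hg' hacd hbcd).1 ha.1)
  · intro hb
    obtain ⟨c, d, hcd, hbcd⟩ := hg'.exists_isCompFix_mem_Ioo hab.2.1 hb.2.ne
    have hacd : a ∈ Ioo c d := (H c d a b ⟨g, hg, hcd⟩ ⟨f, hf, hab⟩).2 hbcd
    exact hb.2.not_gt ((hcd.lt_apply_iff hg' hacd hbcd).1 (hH.2 hb).1)

end Group

/-- a group of orientation-preserving homeomorphisms of `[0,1]` is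
without crossing iff it is without linked fixed points. -/
theorem stmt5 (G : Subgroup (Equiv.Perm ℝ)) (hG : ∀ g ∈ G, HomeoOnIcc g) :
    (∀ f ∈ G, ∀ g ∈ G, ∀ a b : ℝ, IsCompFix f a b →
        g a ∉ Ioo a b ∧ g b ∉ Ioo a b)
      ↔
    (∀ a b c d : ℝ, SuccFix G a b → SuccFix G c d → ¬ LinkedPairs a b c d) := by
  change WithoutCrossing G ↔ WithoutLinkedFixedPoints G
  rw [withoutLinkedFixedPoints_iff]
  exact ⟨fun H _ _ _ _ => H.mem_Ioo_iff hG, withoutCrossing_of_forall_mem_Ioo_iff hG⟩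
end
end

section
/- Let I be a compact interval and f, g : I → I be continuous injective maps with f(I) ∩ g(I) = ∅. Then there exists an infinite sequence (ω_i), with each ω_i ∈ {f, g}, such that limsup_{n→∞} (1/n) · log ℓ(ω_{n−1}∘⋯∘ω_0(I)) < 0, where ℓ denotes length (Lebesgue measure) of the interval. -/
/-!
Probabilistic method, for a finite alphabet `A` of injective self-maps of `s` with disjoint
images. Two words of the same length that differ in some letter map `s` to disjoint sets (look
at the last letter where they differ), so the `|A| ^ m` images of `s` under the words of length
`m` are disjoint subsets of `s`, and for a uniformly random infinite word the expected length of
its `m`-th image is at most `ℓ(s) / |A| ^ m`. By Markov's inequality that image is longer than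
`ℓ(s) (4 / (3 |A|)) ^ m` with probability at most `(3 / 4) ^ m`, so by Borel–Cantelli almost
every word eventually obeys this geometric bound. The images are nondegenerate intervals, so
their logarithms are finite and the `limsup` is negative.
-/

open Set Filter

noncomputable section

/-- The image of `I` under the composition `ω (n-1) ∘ ⋯ ∘ ω 0`. -/
def wordImage (ω : ℕ → ℝ → ℝ) (I : Set ℝ) : ℕ → Set ℝ
  | 0 => I
  | n + 1 => ω n '' wordImage ω I n

open MeasureTheory Function
open scoped ENNReal

lemma IsPreconnected.volume_pos {s : Set ℝ} (hs : IsPreconnected s) (hn : s.Nontrivial) :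
    0 < volume s := by
  obtain ⟨x, hx, y, hy, hxy⟩ := hn
  wlog h : x < y generalizing x y
  · exact this y hy x hx hxy.symm (hxy.lt_or_gt.resolve_left h)
  calc 0 < volume (Icc x y) := by simp [h]
    _ ≤ volume s := measure_mono (hs.Icc_subset hx hy)

section WordImage

variable {ω ω' : ℕ → ℝ → ℝ} {s : Set ℝ}

lemma wordImage_congr {n : ℕ} (h : ∀ i < n, ω i = ω' i) :
    wordImage ω s n = wordImage ω' s n := by
  induction n with
  | zero => rfl
  | succ n ih =>
    rw [wordImage, wordImage, h n n.lt_succ_self, ih fun i hi => h i (hi.trans n.lt_succ_self)]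

lemma wordImage_subset (hm : ∀ i, MapsTo (ω i) s s) : ∀ n, wordImage ω s n ⊆ s
  | 0 => subset_rfl
  | n + 1 => (image_mono (wordImage_subset hm n)).trans (hm n).image_subset

lemma isCompact_wordImage (hs : IsCompact s) (hc : ∀ i, ContinuousOn (ω i) s)
    (hm : ∀ i, MapsTo (ω i) s s) : ∀ n, IsCompact (wordImage ω s n)
  | 0 => hs
  | n + 1 => (isCompact_wordImage hs hc hm n).image_of_continuousOn
      ((hc n).mono (wordImage_subset hm n))

lemma isPreconnected_wordImage (hs : IsPreconnected s) (hc : ∀ i, ContinuousOn (ω i) s)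
    (hm : ∀ i, MapsTo (ω i) s s) : ∀ n, IsPreconnected (wordImage ω s n)
  | 0 => hs
  | n + 1 => (isPreconnected_wordImage hs hc hm n).image _
      ((hc n).mono (wordImage_subset hm n))

lemma nontrivial_wordImage (hs : s.Nontrivial) (hi : ∀ i, InjOn (ω i) s)
    (hm : ∀ i, MapsTo (ω i) s s) : ∀ n, (wordImage ω s n).Nontrivial
  | 0 => hs
  | n + 1 => (nontrivial_wordImage hs hi hm n).image_of_injOn
      ((hi n).mono (wordImage_subset hm n))

lemma disjoint_wordImage {A : Type*} {F : A → ℝ → ℝ} (hi : ∀ a, InjOn (F a) s)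
    (hm : ∀ a, MapsTo (F a) s s) (hd : Pairwise (Disjoint on fun a => F a '' s))
    {σ τ : ℕ → A} {i n : ℕ} (hin : i < n) (hne : σ i ≠ τ i) :
    Disjoint (wordImage (F ∘ σ) s n) (wordImage (F ∘ τ) s n) := by
  induction n with
  | zero => exact absurd hin (Nat.not_lt_zero i)
  | succ n ih =>
    have hσ := wordImage_subset (ω := F ∘ σ) (fun _ => hm _) n
    have hτ := wordImage_subset (ω := F ∘ τ) (fun _ => hm _) n
    by_cases hn : σ n = τ n
    · have hlt : i < n :=
        (Nat.lt_succ_iff_lt_or_eq.1 hin).resolve_right (by rintro rfl; exact hne hn)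
      rw [wordImage, wordImage, comp_apply, comp_apply, hn]
      exact (ih hlt).image (hi _) hσ hτ
    · exact (hd hn).mono (image_mono hσ) (image_mono hτ)

lemma toReal_volume_wordImage_pos (hs : IsCompact s) (hsc : IsPreconnected s)
    (hsn : s.Nontrivial) (hc : ∀ i, ContinuousOn (ω i) s) (hi : ∀ i, InjOn (ω i) s)
    (hm : ∀ i, MapsTo (ω i) s s) (n : ℕ) : 0 < (volume (wordImage ω s n)).toReal :=
  ENNReal.toReal_pos
    ((isPreconnected_wordImage hsc hc hm n).volume_pos (nontrivial_wordImage hsn hi hm n)).ne'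
    (isCompact_wordImage hs hc hm n).measure_lt_top.ne

end WordImage

lemma limsup_log_div_lt_zero_of_eventually_le_geometric {x : ℕ → ℝ} {C r : ℝ} (hr0 : 0 < r)
    (hr1 : r < 1) (hx : ∀ᶠ n in atTop, 0 < x n ∧ x n ≤ C * r ^ n) :
    limsup (fun n : ℕ => ((Real.log (x n) / n : ℝ) : EReal)) atTop < 0 := by
  have hlogr : Real.log r < 0 := Real.log_neg hr0 hr1
  have hlim : Tendsto (fun n : ℕ => Real.log C / n + Real.log r) atTop (nhds (Real.log r)) := by
    simpa using (tendsto_const_div_atTop_nhds_zero_nat (Real.log C)).add_const (Real.log r)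
  have hev : ∀ᶠ n : ℕ in atTop, Real.log (x n) / n < Real.log r / 2 := by
    filter_upwards [hx, hlim.eventually_lt_const (by linarith : Real.log r < Real.log r / 2),
      eventually_gt_atTop 0] with n ⟨hpos, hle⟩ hn hn0
    have hrn : 0 < r ^ n := pow_pos hr0 n
    have hC : 0 < C := pos_of_mul_pos_left (hpos.trans_le hle) hrn.le
    calc Real.log (x n) / n ≤ Real.log (C * r ^ n) / n := by
          gcongr
      _ = Real.log C / n + Real.log r := by
          rw [Real.log_mul hC.ne' hrn.ne', Real.log_pow]
          field_simp
      _ < Real.log r / 2 := hn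
  calc limsup (fun n : ℕ => ((Real.log (x n) / n : ℝ) : EReal)) atTop
      ≤ ((Real.log r / 2 : ℝ) : EReal) :=
        limsup_le_of_le (by isBoundedDefault) (hev.mono fun n hn => EReal.coe_le_coe_iff.2 hn.le)
    _ < 0 := by exact_mod_cast (by linarith : Real.log r / 2 < 0)

section RandomWord

def uniformWordMeasure (A : Type*) [Fintype A] [Nonempty A] [MeasurableSpace A] :
    Measure (ℕ → A) :=
  Measure.infinitePi fun _ => (PMF.uniformOfFintype A).toMeasure

instance {A : Type*} [Fintype A] [Nonempty A] [MeasurableSpace A] :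
    IsProbabilityMeasure (uniformWordMeasure A) := by
  unfold uniformWordMeasure; infer_instance

variable {A : Type*} {F : A → ℝ → ℝ} {s : Set ℝ}

lemma volume_wordImage_eq_comp_restrict (σ₀ : ℕ → A) (m : ℕ) :
    (fun σ => volume (wordImage (F ∘ σ) s m)) =
      (fun w => volume (wordImage (F ∘ updateFinset σ₀ (Finset.range m) w) s m)) ∘
        (Finset.range m).restrict := by
  ext σ
  refine congrArg _ (wordImage_congr fun i hi => ?_)
  simp [updateFinset, Finset.mem_range.2 hi]

lemma measurable_volume_wordImage [Countable A] [Nonempty A] [MeasurableSpace A]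
    [MeasurableSingletonClass A] (m : ℕ) :
    Measurable fun σ : ℕ → A => volume (wordImage (F ∘ σ) s m) := by
  rw [volume_wordImage_eq_comp_restrict (Classical.arbitrary _)]
  exact (measurable_of_countable _).comp (Finset.measurable_restrict _)

lemma lintegral_volume_wordImage_le [Fintype A] [Nonempty A] [MeasurableSpace A]
    [MeasurableSingletonClass A] (hs : IsCompact s) (hc : ∀ a, ContinuousOn (F a) s)
    (hi : ∀ a, InjOn (F a) s) (hm : ∀ a, MapsTo (F a) s s)
    (hd : Pairwise (Disjoint on fun a => F a '' s)) (m : ℕ) :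
    ∫⁻ σ, volume (wordImage (F ∘ σ) s m) ∂uniformWordMeasure A
      ≤ volume s * (Fintype.card A : ℝ≥0∞)⁻¹ ^ m := by
  set σ₀ : ℕ → A := fun _ => Classical.arbitrary A
  set J : (Finset.range m → A) → Set ℝ :=
    fun w => wordImage (F ∘ updateFinset σ₀ (Finset.range m) w) s m
  have hJ : Pairwise (Disjoint on J) := by
    intro w w' hne
    obtain ⟨⟨i, hi'⟩, hwi⟩ := Function.ne_iff.1 hne
    exact disjoint_wordImage hi hm hd (Finset.mem_range.1 hi')
      (by simpa [updateFinset, hi'] using hwi)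
  calc ∫⁻ σ, volume (wordImage (F ∘ σ) s m) ∂uniformWordMeasure A
      = ∫⁻ w, volume (J w)
          ∂Measure.pi fun _ : Finset.range m => (PMF.uniformOfFintype A).toMeasure := by
        rw [volume_wordImage_eq_comp_restrict σ₀, uniformWordMeasure]
        exact lintegral_restrict_infinitePi (fun _ => (PMF.uniformOfFintype A).toMeasure)
          (measurable_of_countable (fun w => volume (J w)))
    _ = ∑ w, volume (J w) * (Fintype.card A : ℝ≥0∞)⁻¹ ^ m := by
        rw [lintegral_fintype]
        congr! with w
        simp [Measure.pi_singleton, PMF.toMeasure_apply_singleton _ _ (measurableSet_singleton _)]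
    _ = volume (⋃ w, J w) * (Fintype.card A : ℝ≥0∞)⁻¹ ^ m := by
        rw [measure_iUnion hJ fun w =>
            (isCompact_wordImage hs (fun _ => hc _) (fun _ => hm _) m).measurableSet,
          tsum_fintype, Finset.sum_mul]
    _ ≤ volume s * (Fintype.card A : ℝ≥0∞)⁻¹ ^ m := by
        gcongr
        exact iUnion_subset fun w => wordImage_subset (fun _ => hm _) m

lemma uniformWordMeasure_volume_wordImage_ge_le [Fintype A] [Nonempty A] [MeasurableSpace A]
    [MeasurableSingletonClass A] (hs : IsCompact s) (hs0 : volume s ≠ 0)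
    (hc : ∀ a, ContinuousOn (F a) s) (hi : ∀ a, InjOn (F a) s) (hm : ∀ a, MapsTo (F a) s s)
    (hd : Pairwise (Disjoint on fun a => F a '' s)) (ρ : ℝ≥0∞) (m : ℕ) :
    uniformWordMeasure A {σ | volume s * ((Fintype.card A : ℝ≥0∞)⁻¹ * ρ) ^ m
      ≤ volume (wordImage (F ∘ σ) s m)} ≤ ρ⁻¹ ^ m := by
  set c : ℝ≥0∞ := volume s * (Fintype.card A : ℝ≥0∞)⁻¹ ^ m
  have hc0 : c ≠ 0 :=
    mul_ne_zero hs0 (pow_ne_zero _ (ENNReal.inv_ne_zero.2 (ENNReal.natCast_ne_top _)))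
  have hctop : c ≠ ⊤ := ENNReal.mul_ne_top hs.measure_lt_top.ne
    (ENNReal.pow_ne_top (ENNReal.inv_ne_top.2 (Nat.cast_ne_zero.2 Fintype.card_ne_zero)))
  have hmarkov := (mul_meas_ge_le_lintegral₀
    (measurable_volume_wordImage (F := F) (s := s) m).aemeasurable
    (volume s * ((Fintype.card A : ℝ≥0∞)⁻¹ * ρ) ^ m) (μ := uniformWordMeasure A)).trans
    (lintegral_volume_wordImage_le hs hc hi hm hd m)
  rw [← ENNReal.inv_pow, ENNReal.le_inv_iff_mul_le, ← ENNReal.mul_le_mul_iff_right hc0 hctop,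
    mul_one]
  calc c * (_ * ρ ^ m) = volume s * ((Fintype.card A : ℝ≥0∞)⁻¹ * ρ) ^ m * _ := by
        simp only [c, mul_pow]; ring
    _ ≤ c := hmarkov

lemma ae_eventually_volume_wordImage_lt [Fintype A] [Nonempty A] [MeasurableSpace A]
    [MeasurableSingletonClass A] (hs : IsCompact s) (hs0 : volume s ≠ 0)
    (hc : ∀ a, ContinuousOn (F a) s) (hi : ∀ a, InjOn (F a) s) (hm : ∀ a, MapsTo (F a) s s)
    (hd : Pairwise (Disjoint on fun a => F a '' s)) {ρ : ℝ≥0∞} (hρ : 1 < ρ) :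
    ∀ᵐ σ ∂uniformWordMeasure A, ∀ᶠ m in atTop, volume (wordImage (F ∘ σ) s m)
      < volume s * ((Fintype.card A : ℝ≥0∞)⁻¹ * ρ) ^ m := by
  have hsum : ∑' m, ρ⁻¹ ^ m ≠ ⊤ := by
    rw [ENNReal.tsum_geometric]
    exact ENNReal.inv_ne_top.2 (tsub_pos_of_lt (ENNReal.inv_lt_one.2 hρ)).ne'
  filter_upwards [ae_eventually_notMem (ne_top_of_le_ne_top hsum (ENNReal.tsum_le_tsum
    (uniformWordMeasure_volume_wordImage_ge_le hs hs0 hc hi hm hd ρ)))] with σ hσ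
  filter_upwards [hσ] with m hσm
  simpa using hσm

theorem exists_limsup_log_volume_wordImage_div_lt_zero [Fintype A] (hA : 2 ≤ Fintype.card A)
    (hs : IsCompact s) (hsc : IsPreconnected s) (hsn : s.Nontrivial)
    (hc : ∀ a, ContinuousOn (F a) s) (hi : ∀ a, InjOn (F a) s) (hm : ∀ a, MapsTo (F a) s s)
    (hd : Pairwise (Disjoint on fun a => F a '' s)) :
    ∃ σ : ℕ → A, limsup (fun n : ℕ =>
      ((Real.log (volume (wordImage (F ∘ σ) s n)).toReal / n : ℝ) : EReal)) atTop < 0 := by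
  let : MeasurableSpace A := ⊤
  have : Nonempty A := Fintype.card_pos_iff.1 (by omega)
  have hρ : (1 : ℝ≥0∞) < 4 / 3 := by rw [ENNReal.lt_div_iff_mul_lt] <;> norm_num
  obtain ⟨σ, hσ⟩ :=
    (ae_eventually_volume_wordImage_lt hs (hsc.volume_pos hsn).ne' hc hi hm hd hρ).exists
  have hcard : (2 : ℝ) ≤ Fintype.card A := by exact_mod_cast hA
  refine ⟨σ, limsup_log_div_lt_zero_of_eventually_le_geometric (C := (volume s).toReal)
    (r := (Fintype.card A : ℝ)⁻¹ * (4 / 3)) (by positivity) ?_ ?_⟩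
  · rw [inv_mul_lt_iff₀ (by positivity)]
    linarith
  filter_upwards [hσ] with m hlt
  refine ⟨toReal_volume_wordImage_pos hs hsc hsn (fun i => hc (σ i)) (fun i => hi (σ i))
    (fun i => hm (σ i)) m, ?_⟩
  calc (volume (wordImage (F ∘ σ) s m)).toReal
      ≤ (volume s * ((Fintype.card A : ℝ≥0∞)⁻¹ * (4 / 3)) ^ m).toReal :=
        ENNReal.toReal_mono (by simp [ENNReal.mul_eq_top, ENNReal.div_eq_top,
          hs.measure_lt_top.ne]) hlt.le
    _ = (volume s).toReal * ((Fintype.card A : ℝ)⁻¹ * (4 / 3)) ^ m := by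
        simp [ENNReal.toReal_div]

end RandomWord

/-- if `f, g : I → I` are continuous and injective with disjoint images,
there is an infinite word in `f, g` whose images of `I` shrink at a uniform
exponential rate. -/
theorem stmt8 (a b : ℝ) (hab : a < b) (f g : ℝ → ℝ)
    (hfc : ContinuousOn f (Icc a b)) (hgc : ContinuousOn g (Icc a b))
    (hfi : InjOn f (Icc a b)) (hgi : InjOn g (Icc a b))
    (hfm : MapsTo f (Icc a b) (Icc a b)) (hgm : MapsTo g (Icc a b) (Icc a b))
    (hdisj : Disjoint (f '' Icc a b) (g '' Icc a b)) :
    ∃ ω : ℕ → ℝ → ℝ, (∀ i, ω i = f ∨ ω i = g) ∧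
      Filter.limsup (fun n : ℕ =>
          ((Real.log (MeasureTheory.volume (wordImage ω (Icc a b) n)).toReal / n : ℝ) : EReal))
        Filter.atTop < 0 := by
  set F : Bool → ℝ → ℝ := fun x => bif x then f else g
  have hd : Pairwise (Disjoint on fun x => F x '' Icc a b) := by
    rintro (_ | _) (_ | _) h <;> simp_all [onFun, F, disjoint_comm]
  obtain ⟨σ, hσ⟩ := exists_limsup_log_volume_wordImage_div_lt_zero le_rfl isCompact_Icc
    isPreconnected_Icc ⟨a, left_mem_Icc.2 hab.le, b, right_mem_Icc.2 hab.le, hab.ne⟩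
    (Bool.forall_bool.2 ⟨hgc, hfc⟩) (Bool.forall_bool.2 ⟨hgi, hfi⟩)
    (Bool.forall_bool.2 ⟨hgm, hfm⟩) hd
  exact ⟨F ∘ σ, fun i => by cases h : σ i <;> simp [F, h], hσ⟩
end
end

section
/- Let g ∈ Homeo_+([0,1]). A homeomorphism h ∈ Homeo_+([0,1]) satisfies h(x) ∈ {x, g(x)} for all x if and only if there exists a family 𝓘 of connected components of [0,1] ∖ Fix(g) such that h equals g on the union of the intervals in 𝓘 and equals the identity elsewhere. -/
open Set Filter

noncomputable section

/-! If `h x ∈ {x, g x}` everywhere, then on each component `(a, b)` of `[0,1] ∖ Fix g` the two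
relatively closed sets `{h = g}` and `{h = id}` cover `(a, b)` and are disjoint, because `g` has
no fixed point there; by connectedness `h` agrees with `g` or with the identity on the whole of
`(a, b)`. The family `𝓘` consists of the components of the first kind. -/

theorem IsPreconnected.eqOn_or_eqOn {X Y : Type*} [TopologicalSpace X] [TopologicalSpace Y]
    [T2Space Y] {s : Set X} (hs : IsPreconnected s) {f g k : X → Y} (hf : ContinuousOn f s)
    (hg : ContinuousOn g s) (hk : ContinuousOn k s) (hfgk : ∀ x ∈ s, f x = g x ∨ f x = k x)
    (hgk : ∀ x ∈ s, g x ≠ k x) : EqOn f g s ∨ EqOn f k s := by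
  obtain ⟨u, hu, hus⟩ :=
    continuousOn_iff_isClosed.1 (hf.prodMk hg) (diagonal Y) isClosed_diagonal
  obtain ⟨v, hv, hvs⟩ :=
    continuousOn_iff_isClosed.1 (hf.prodMk hk) (diagonal Y) isClosed_diagonal
  have mem_u {x} (hx : x ∈ s) : x ∈ u ↔ f x = g x := by
    simpa [hx] using (Set.ext_iff.1 hus x).symm
  have mem_v {x} (hx : x ∈ s) : x ∈ v ↔ f x = k x := by
    simpa [hx] using (Set.ext_iff.1 hvs x).symm
  have hcover : s ⊆ u ∪ v := fun x hx => (hfgk x hx).imp (mem_u hx).2 (mem_v hx).2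
  have hdisj : s ∩ (u ∩ v) = ∅ := by
    refine eq_empty_of_forall_notMem fun x ⟨hx, hxu, hxv⟩ => hgk x hx ?_
    rw [← (mem_u hx).1 hxu, (mem_v hx).1 hxv]
  refine (isPreconnected_iff_subset_of_disjoint_closed.1 hs u v hu hv hcover hdisj).imp ?_ ?_
  · exact fun hsu x hx => (mem_u hx).1 (hsu hx)
  · exact fun hsv x hx => (mem_v hx).1 (hsv hx)

theorem IsClosed.exists_Ioo_subset_compl {α : Type*} [ConditionallyCompleteLinearOrder α]
    [TopologicalSpace α] [OrderTopology α] {F : Set α} (hF : IsClosed F) {x a₀ b₀ : α}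
    (ha₀ : a₀ ∈ F) (ha₀x : a₀ ≤ x) (hb₀ : b₀ ∈ F) (hxb₀ : x ≤ b₀) (hx : x ∉ F) :
    ∃ a ∈ F, ∃ b ∈ F, x ∈ Ioo a b ∧ Ioo a b ⊆ Fᶜ := by
  have hA : sSup (F ∩ Iic x) ∈ F ∩ Iic x :=
    (hF.inter isClosed_Iic).csSup_mem ⟨a₀, ha₀, ha₀x⟩ ⟨x, fun _ hy => hy.2⟩
  have hB : sInf (F ∩ Ici x) ∈ F ∩ Ici x :=
    (hF.inter isClosed_Ici).csInf_mem ⟨b₀, hb₀, hxb₀⟩ ⟨x, fun _ hy => hy.2⟩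
  refine ⟨_, hA.1, _, hB.1, ⟨hA.2.lt_of_ne ?_, hB.2.lt_of_ne' ?_⟩, fun y hy hyF => ?_⟩
  · exact fun h => hx (h ▸ hA.1)
  · exact fun h => hx (h ▸ hB.1)
  rcases le_total y x with hyx | hxy
  · exact hy.1.not_ge (le_csSup ⟨x, fun _ hz => hz.2⟩ ⟨hyF, hyx⟩)
  · exact hy.2.not_ge (csInf_le ⟨x, fun _ hz => hz.2⟩ ⟨hyF, hxy⟩)

namespace HomeoOnIcc

variable {g : Equiv.Perm ℝ}

theorem surjOn (hg : HomeoOnIcc g) : SurjOn g (Icc 0 1) (Icc 0 1) := by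
  intro y hy
  refine ⟨g.symm y, ?_, g.apply_symm_apply y⟩
  by_contra hout
  have := hg.1 _ hout
  rw [g.apply_symm_apply] at this
  exact hout (this ▸ hy)

theorem map_zero (hg : HomeoOnIcc g) : g 0 = 0 := by
  obtain ⟨z, hz, hgz⟩ := hg.surjOn (left_mem_Icc.2 zero_le_one)
  have := hg.2.2.1.monotoneOn (left_mem_Icc.2 zero_le_one) hz hz.1
  exact le_antisymm (hgz ▸ this) (hg.2.1 (left_mem_Icc.2 zero_le_one)).1

theorem map_one (hg : HomeoOnIcc g) : g 1 = 1 := by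
  obtain ⟨z, hz, hgz⟩ := hg.surjOn (right_mem_Icc.2 zero_le_one)
  have := hg.2.2.1.monotoneOn hz (right_mem_Icc.2 zero_le_one) hz.2
  exact le_antisymm (hg.2.1 (right_mem_Icc.2 zero_le_one)).2 (hgz ▸ this)

theorem isClosed_fixedPoints (hg : HomeoOnIcc g) : IsClosed {x ∈ Icc (0:ℝ) 1 | g x = x} :=
  isClosed_Icc.isClosed_eq hg.2.2.2 continuousOn_id

theorem exists_isCompFix_mem_Ioo_s11 (hg : HomeoOnIcc g) {x : ℝ} (hx : g x ≠ x) :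
    ∃ a b, IsCompFix g a b ∧ x ∈ Ioo a b := by
  have hxI : x ∈ Icc (0:ℝ) 1 := by_contra fun hout => hx (hg.1 x hout)
  obtain ⟨a, ⟨haI, hga⟩, b, ⟨hbI, hgb⟩, hxab, hgap⟩ :=
    hg.isClosed_fixedPoints.exists_Ioo_subset_compl
      ⟨left_mem_Icc.2 zero_le_one, hg.map_zero⟩ hxI.1
      ⟨right_mem_Icc.2 zero_le_one, hg.map_one⟩ hxI.2 (fun h => hx h.2)
  refine ⟨a, b, ⟨haI, hbI, hxab.1.trans hxab.2, hga, hgb, fun y hy hgy => hgap hy ⟨?_, hgy⟩⟩, hxab⟩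
  exact ⟨haI.1.trans hy.1.le, hy.2.le.trans hbI.2⟩

end HomeoOnIcc

theorem IsCompFix.Ioo_subset_Icc {g : Equiv.Perm ℝ} {a b : ℝ} (hab : IsCompFix g a b) :
    Ioo a b ⊆ Icc 0 1 :=
  Ioo_subset_Icc_self.trans (Icc_subset_Icc hab.1.1 hab.2.1.2)

/-- `h` satisfies `h x ∈ {x, g x}` for all `x` iff `h` equals `g`
on the union of a family of connected components of `[0,1] ∖ Fix g` and the
identity elsewhere. -/
theorem stmt11 (g h : Equiv.Perm ℝ) (hg : HomeoOnIcc g) (hh : HomeoOnIcc h) :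
    (∀ x : ℝ, h x = x ∨ h x = g x) ↔
    ∃ 𝓘 : Set (ℝ × ℝ), (∀ p ∈ 𝓘, IsCompFix g p.1 p.2) ∧
      (∀ x : ℝ, (∃ p ∈ 𝓘, x ∈ Ioo p.1 p.2) → h x = g x) ∧
      (∀ x : ℝ, (¬ ∃ p ∈ 𝓘, x ∈ Ioo p.1 p.2) → h x = x) := by
  constructor
  · intro H
    refine ⟨{p | IsCompFix g p.1 p.2 ∧ EqOn h g (Ioo p.1 p.2)}, fun p hp => hp.1,
      fun x ⟨p, hp, hx⟩ => hp.2 hx, fun x hx => by_contra fun hhx => ?_⟩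
    have hhg : h x = g x := (H x).resolve_left hhx
    obtain ⟨a, b, hab, hxab⟩ := hg.exists_isCompFix_mem_Ioo_s11 (hhg ▸ hhx)
    have hEq : EqOn h g (Ioo a b) := by
      refine (isPreconnected_Ioo.eqOn_or_eqOn (hh.2.2.2.mono hab.Ioo_subset_Icc)
        (hg.2.2.2.mono hab.Ioo_subset_Icc) continuousOn_id (fun y _ => (H y).symm)
        hab.2.2.2.2.2).resolve_right fun hid => hhx (hid hxab)
    exact hx ⟨(a, b), ⟨hab, hEq⟩, hxab⟩
  · rintro ⟨𝓘, -, h𝓘g, h𝓘id⟩ x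
    by_cases hx : ∃ p ∈ 𝓘, x ∈ Ioo p.1 p.2
    exacts [Or.inr (h𝓘g x hx), Or.inl (h𝓘id x hx)]
end
end

section
/- Let f ∈ Homeo_+([0,1]), let I = [x₀, f(x₀)] be a fundamental domain of f (with f(y) > y for y in the interior of the support of f), and let g be a nontrivial homeomorphism supported on I with a single component of support whose closure S satisfies S ⊂ Int(supp(f)). If additionally S is contained in the interior of I, then the iterates fⁱ g f^{−i}, i ∈ ℤ, have pairwise disjoint supports and the group ⟨f, g⟩ is isomorphic to the wreath-type product (⊕_{ℤ} ⟨g⟩) ⋊ ℤ, where ℤ acts by shifting the factors. -/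
open Set Filter

noncomputable section

/-!
Let `U = (x₀, f x₀)`. Since `f` is increasing, the translates `fⁱ • U` are pairwise disjoint and
miss the orbit of `x₀`, and `g` is supported in `U`. Hence the conjugates `fⁱ g f⁻ⁱ` have disjoint
supports and commute, so `n ↦ ∏ᵢ fⁱ nᵢ f⁻ⁱ` is a homomorphism `⊕_ℤ ⟨g⟩ → Perm ℝ` which
intertwines the shift with conjugation by `f`, and together with `k ↦ fᵏ` it defines a
homomorphism on the semidirect product whose image is `⟨f, g⟩`. It is injective: the value at
`x₀` of `(∏ᵢ fⁱ nᵢ f⁻ⁱ) fᵏ` is `fᵏ x₀`, which determines `k`, and on `fⁱ • U` the product acts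
as `fⁱ nᵢ f⁻ⁱ`, which determines `nᵢ`.
-/

open MulAction Pointwise
open Equiv (Perm)
open scoped Function IsMulCommutative

def shiftAut (A : Type*) [AddCommMonoid A] :
    Multiplicative ℤ →* MulAut (Multiplicative (ℤ →₀ A)) where
  toFun i := AddEquiv.toMultiplicative (Finsupp.domCongr (Equiv.addRight i.toAdd))
  map_one' := by ext; simp [Perm.one_def]
  map_mul' i j := by
    ext n k
    simp [Perm.mul_def, add_right_comm, add_assoc]

theorem shiftAut_apply {A : Type*} [AddCommMonoid A] (i : Multiplicative ℤ)
    (n : Multiplicative (ℤ →₀ A)) (j : ℤ) :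
    (shiftAut A i n).toAdd j = n.toAdd (j - i.toAdd) := by
  simp [shiftAut, sub_eq_add_neg]

theorem shiftAut_single {A : Type*} [AddCommMonoid A] (q : Multiplicative ℤ) (i : ℤ) (u : A) :
    shiftAut A q (.ofAdd (Finsupp.single i u)) = .ofAdd (Finsupp.single (q.toAdd + i) u) := by
  simp [shiftAut, add_comm]

namespace Equiv.Perm

variable {α : Type*}

theorem strictMono_inv [LinearOrder α] {f : Perm α} (hf : StrictMono f) : StrictMono ⇑f⁻¹ :=
  fun x y h => hf.lt_iff_lt.mp (by simpa using h)

theorem strictMono_zpow [LinearOrder α] {f : Perm α} (hf : StrictMono f) (i : ℤ) :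
    StrictMono ⇑(f ^ i) := by
  induction i using Int.induction_on with
  | zero => exact strictMono_id
  | succ i ih => rw [zpow_add_one, coe_mul]; exact ih.comp hf
  | pred i ih => rw [zpow_sub_one, coe_mul]; exact ih.comp (strictMono_inv hf)

theorem smul_Ioo [LinearOrder α] {f : Perm α} (hf : StrictMono f) (a b : α) :
    f • Ioo a b = Ioo (f a) (f b) := by
  rw [← image_smul]
  exact (hf.orderIsoOfSurjective f f.surjective).image_Ioo a b

theorem commute_of_disjoint_compl_fixedBy {f g : Perm α}
    (h : _root_.Disjoint (fixedBy α f)ᶜ (fixedBy α g)ᶜ) : Commute f g :=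
  Disjoint.commute fun x => by
    by_contra! hx
    exact Set.disjoint_left.mp h hx.1 hx.2

end Equiv.Perm

section Wreath

variable {α : Type*} {f g : Perm α} {U : Set α}

theorem compl_fixedBy_zpowers_subset (hg : (fixedBy α g)ᶜ ⊆ U) (u : Subgroup.zpowers g) :
    (fixedBy α (u : Perm α))ᶜ ⊆ U := by
  obtain ⟨u, k, rfl⟩ := u
  exact (compl_subset_compl.mpr (fixedBy_subset_fixedBy_zpow α g k)).trans hg

theorem compl_fixedBy_conj_subset {u : Perm α} (hu : (fixedBy α u)ᶜ ⊆ U) (h : Perm α) :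
    (fixedBy α (h * u * h⁻¹))ᶜ ⊆ h • U := by
  rw [← smul_fixedBy, ← smul_set_compl]
  exact smul_set_mono hu

theorem disjoint_compl_fixedBy_conj (hg : (fixedBy α g)ᶜ ⊆ U)
    (hU : Pairwise (Disjoint on fun i : ℤ => (f ^ i) • U)) {i j : ℤ} (hij : i ≠ j) :
    Disjoint (fixedBy α (f ^ i * g * (f ^ i)⁻¹))ᶜ (fixedBy α (f ^ j * g * (f ^ j)⁻¹))ᶜ :=
  (hU hij).mono (compl_fixedBy_conj_subset hg _) (compl_fixedBy_conj_subset hg _)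

variable (f g) in
def conjugatesClosure : Subgroup (Perm α) :=
  Subgroup.closure (range fun i : ℤ => f ^ i * g * (f ^ i)⁻¹)

theorem isMulCommutative_conjugatesClosure (hg : (fixedBy α g)ᶜ ⊆ U)
    (hU : Pairwise (Disjoint on fun i : ℤ => (f ^ i) • U)) :
    IsMulCommutative (conjugatesClosure f g) := by
  refine Subgroup.isMulCommutative_closure ?_
  rintro _ ⟨i, rfl⟩ _ ⟨j, rfl⟩
  obtain rfl | hij := eq_or_ne i j
  · rfl
  · exact (Perm.commute_of_disjoint_compl_fixedBy (disjoint_compl_fixedBy_conj hg hU hij)).eq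

theorem conj_mem_conjugatesClosure (i : ℤ) (u : Subgroup.zpowers g) :
    f ^ i * u * (f ^ i)⁻¹ ∈ conjugatesClosure f g := by
  obtain ⟨u, k, rfl⟩ := u
  rw [← conj_zpow]
  exact Subgroup.zpow_mem _ (Subgroup.subset_closure (mem_range_self i)) k

theorem conjugatesClosure_le_closure_pair :
    conjugatesClosure f g ≤ Subgroup.closure {f, g} := by
  rw [conjugatesClosure, Subgroup.closure_le]
  rintro _ ⟨i, rfl⟩
  have hf : f ∈ Subgroup.closure {f, g} := Subgroup.subset_closure (mem_insert f {g})
  have hg : g ∈ Subgroup.closure {f, g} := Subgroup.subset_closure (mem_insert_of_mem f rfl)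
  exact Subgroup.mul_mem _ (Subgroup.mul_mem _ (Subgroup.zpow_mem _ hf i) hg)
    (Subgroup.inv_mem _ (Subgroup.zpow_mem _ hf i))

variable [IsMulCommutative (conjugatesClosure f g)]

variable (f g) in
def conjugatesHom : Multiplicative (ℤ →₀ Additive (Subgroup.zpowers g)) →* Perm α :=
  (conjugatesClosure f g).subtype.comp <| AddMonoidHom.toMultiplicativeLeft <|
    Finsupp.liftAddHom fun i => MonoidHom.toAdditive <|
      ((MulAut.conj (f ^ i)).toMonoidHom.comp (Subgroup.zpowers g).subtype).codRestrict _
        (conj_mem_conjugatesClosure i)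

theorem conjugatesHom_mem (n : Multiplicative (ℤ →₀ Additive (Subgroup.zpowers g))) :
    conjugatesHom f g n ∈ conjugatesClosure f g :=
  SetLike.coe_mem _

theorem conjugatesHom_single (i : ℤ) (u : Additive (Subgroup.zpowers g)) :
    conjugatesHom f g (.ofAdd (Finsupp.single i u)) = f ^ i * u.toMul * (f ^ i)⁻¹ := by
  simp [conjugatesHom, -map_zpow]

theorem conjugatesHom_apply_eq_self (hg : (fixedBy α g)ᶜ ⊆ U)
    (n : ℤ →₀ Additive (Subgroup.zpowers g)) {x : α} (hx : ∀ i ∈ n.support, x ∉ (f ^ i) • U) :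
    conjugatesHom f g (.ofAdd n) x = x := by
  induction n using Finsupp.induction with
  | zero => rfl
  | single_add i u n hi hu ih =>
    rw [Finsupp.support_single_add hi hu] at hx
    rw [ofAdd_add, map_mul, Perm.mul_apply, ih fun j hj => hx j (Finset.mem_cons_of_mem hj),
      conjugatesHom_single]
    by_contra hmoved
    exact hx i (Finset.mem_cons_self i _)
      (compl_fixedBy_conj_subset (compl_fixedBy_zpowers_subset hg _) _ hmoved)

theorem conjugatesHom_injective (hg : (fixedBy α g)ᶜ ⊆ U)
    (hU : Pairwise (Disjoint on fun i : ℤ => (f ^ i) • U)) :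
    Function.Injective (conjugatesHom f g) := by
  refine (injective_iff_map_eq_one _).mpr fun n hn => ?_
  by_contra hne
  obtain ⟨j, hj⟩ : ∃ j, n.toAdd j ≠ 0 := by
    by_contra! h
    exact hne (congrArg Multiplicative.ofAdd (Finsupp.ext h))
  set u : Subgroup.zpowers g := (n.toAdd j).toMul
  obtain ⟨x, hx⟩ : ∃ x, (u : Perm α) x ≠ x := by
    by_contra! h
    exact hj (toMul_eq_one.mp (Subtype.ext (Equiv.ext h)))
  have hxU : (f ^ j) x ∈ (f ^ j) • U := smul_mem_smul_set (compl_fixedBy_zpowers_subset hg u hx)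
  have hrest : conjugatesHom f g (.ofAdd (n.toAdd.erase j)) ((f ^ j) x) = (f ^ j) x :=
    conjugatesHom_apply_eq_self hg _ fun i hi hmem =>
      Set.disjoint_left.mp (hU (by rintro rfl; simp at hi)) hmem hxU
  have hn' : conjugatesHom f g n ((f ^ j) x) = (f ^ j) ((u : Perm α) x) := by
    rw [← ofAdd_toAdd n, ← Finsupp.single_add_erase j n.toAdd, ofAdd_add, map_mul,
      Perm.mul_apply, hrest, conjugatesHom_single]
    simp [u]
  rw [hn, Perm.one_apply] at hn'
  exact hx ((f ^ j).injective hn'.symm)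

theorem conjugatesHom_shiftAut (q : Multiplicative ℤ)
    (n : Multiplicative (ℤ →₀ Additive (Subgroup.zpowers g))) :
    conjugatesHom f g (shiftAut _ q n) = f ^ q.toAdd * conjugatesHom f g n * (f ^ q.toAdd)⁻¹ := by
  induction n using Multiplicative.rec with | ofAdd n => ?_
  induction n using Finsupp.induction_linear with
  | zero => simp
  | add m n hm hn => simp only [ofAdd_add, map_mul, hm, hn]; group
  | single i u => rw [shiftAut_single, conjugatesHom_single, conjugatesHom_single, zpow_add]; group

variable (f g) in
def wreathHom :
    Multiplicative (ℤ →₀ Additive (Subgroup.zpowers g)) ⋊[shiftAut _] Multiplicative ℤ →* Perm α :=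
  SemidirectProduct.lift (conjugatesHom f g) (zpowersHom _ f) fun q =>
    MonoidHom.ext fun n => conjugatesHom_shiftAut q n

theorem wreathHom_injective (hg : (fixedBy α g)ᶜ ⊆ U)
    (hU : Pairwise (Disjoint on fun i : ℤ => (f ^ i) • U)) {x₀ : α}
    (hx₀ : ∀ i : ℤ, x₀ ∉ (f ^ i) • U) (horbit : Function.Injective fun k : ℤ => (f ^ k) x₀) :
    Function.Injective (wreathHom f g) := by
  refine (injective_iff_map_eq_one _).mpr fun ⟨n, q⟩ h => ?_
  have hnq : conjugatesHom f g n = (f ^ q.toAdd)⁻¹ := eq_inv_of_mul_eq_one_left h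
  have hq : q = 1 := by
    have hfix : conjugatesHom f g n x₀ = x₀ :=
      conjugatesHom_apply_eq_self hg n.toAdd fun i _ => hx₀ i
    rw [hnq, Perm.inv_eq_iff_eq] at hfix
    exact toAdd_eq_zero.mp (horbit (hfix.symm.trans (by simp)))
  subst hq
  have hn : n = 1 := conjugatesHom_injective hg hU (by simpa using hnq)
  subst hn
  rfl

theorem wreathHom_range : (wreathHom f g).range = Subgroup.closure {f, g} := by
  have hf : f ∈ Subgroup.closure {f, g} := Subgroup.subset_closure (mem_insert f {g})
  refine le_antisymm ?_ ?_
  · rintro _ ⟨⟨n, q⟩, rfl⟩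
    exact Subgroup.mul_mem _ (conjugatesClosure_le_closure_pair (conjugatesHom_mem n))
      (Subgroup.zpow_mem _ hf _)
  · rw [Subgroup.closure_le, insert_subset_iff, singleton_subset_iff]
    constructor
    · exact ⟨.inr (.ofAdd 1), by simp [wreathHom]⟩
    · refine ⟨.inl (.ofAdd (Finsupp.single 0 (.ofMul ⟨g, Subgroup.mem_zpowers g⟩))), ?_⟩
      simp [wreathHom, conjugatesHom_single]

end Wreath

theorem nonempty_closure_pair_mulEquiv_wreath {α : Type*} {f g : Perm α} {U : Set α}
    (hg : (fixedBy α g)ᶜ ⊆ U) (hU : Pairwise (Disjoint on fun i : ℤ => (f ^ i) • U)) {x₀ : α}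
    (hx₀ : ∀ i : ℤ, x₀ ∉ (f ^ i) • U) (horbit : Function.Injective fun k : ℤ => (f ^ k) x₀) :
    Nonempty (Subgroup.closure {f, g} ≃*
      Multiplicative (ℤ →₀ Additive (Subgroup.zpowers g)) ⋊[shiftAut _] Multiplicative ℤ) := by
  have := isMulCommutative_conjugatesClosure hg hU
  exact ⟨((MonoidHom.ofInjective (wreathHom_injective hg hU hx₀ horbit)).trans
    (MulEquiv.subgroupCongr wreathHom_range)).symm⟩

theorem HomeoOnIcc.strictMono {f : Perm ℝ} (hf : HomeoOnIcc f) : StrictMono f := by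
  obtain ⟨hid, hmaps, hmono, -⟩ := hf
  intro x y hxy
  by_cases hx : x ∈ Icc (0 : ℝ) 1 <;> by_cases hy : y ∈ Icc (0 : ℝ) 1
  · exact hmono hx hy hxy
  · have hy1 : 1 < y := by
      by_contra! h
      exact hy ⟨hx.1.trans hxy.le, h⟩
    rw [hid y hy]
    exact (hmaps hx).2.trans_lt hy1
  · have hx0 : x < 0 := by
      by_contra! h
      exact hx ⟨h, hxy.le.trans hy.2⟩
    rw [hid x hx]
    exact hx0.trans_le (hmaps hy).1
  · rw [hid x hx, hid y hy]
    exact hxy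

section FundamentalDomain

variable {α : Type*} [LinearOrder α] {f : Perm α} {x₀ : α}

theorem strictMono_zpow_apply (hf : StrictMono f) (h : x₀ < f x₀) :
    StrictMono fun k : ℤ => (f ^ k) x₀ :=
  strictMono_int_of_lt_succ fun k => by
    simpa [zpow_add_one] using Perm.strictMono_zpow hf k h

theorem zpow_smul_Ioo (hf : StrictMono f) (i : ℤ) :
    (f ^ i) • Ioo x₀ (f x₀) = Ioo ((f ^ i) x₀) ((f ^ (i + 1)) x₀) := by
  rw [Perm.smul_Ioo (Perm.strictMono_zpow hf i), zpow_add_one, Perm.mul_apply]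

theorem pairwise_disjoint_zpow_smul_Ioo (hf : StrictMono f) (h : x₀ < f x₀) :
    Pairwise (Disjoint on fun i : ℤ => (f ^ i) • Ioo x₀ (f x₀)) := by
  simpa [zpow_smul_Ioo hf, Order.succ_eq_add_one] using
    (strictMono_zpow_apply hf h).monotone.pairwise_disjoint_on_Ioo_succ

theorem notMem_zpow_smul_Ioo (hf : StrictMono f) (h : x₀ < f x₀) (i : ℤ) :
    x₀ ∉ (f ^ i) • Ioo x₀ (f x₀) := by
  rw [zpow_smul_Ioo hf]
  rintro ⟨hlt, hgt⟩
  have hs := strictMono_zpow_apply hf h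
  have hi : i < 0 := hs.lt_iff_lt.mp (by simpa using hlt)
  have hi' : 0 < i + 1 := hs.lt_iff_lt.mp (by simpa using hgt)
  omega

end FundamentalDomain

theorem stmt15_general (f g : Equiv.Perm ℝ) (hf : HomeoOnIcc f) (x₀ a b : ℝ)
    (hfund : x₀ < f x₀ ∧ Icc x₀ (f x₀) ⊆ closure {x : ℝ | f x ≠ x})
    (hsupp : {x : ℝ | g x ≠ x} = Ioo a b)
    (hSI : Icc a b ⊆ Ioo x₀ (f x₀)) :
    (∀ i j : ℤ, i ≠ j →
      Disjoint {x : ℝ | (f ^ i * g * f ^ (-i)) x ≠ x}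
        {x : ℝ | (f ^ j * g * f ^ (-j)) x ≠ x}) ∧
    ∃ φ : Multiplicative ℤ →*
        MulAut (Multiplicative (ℤ →₀ Additive ↥(Subgroup.zpowers g))),
      (∀ (i : Multiplicative ℤ)
          (n : Multiplicative (ℤ →₀ Additive ↥(Subgroup.zpowers g))) (j : ℤ),
        Multiplicative.toAdd ((φ i) n) j =
          Multiplicative.toAdd n (j - Multiplicative.toAdd i)) ∧
      Nonempty (↥(Subgroup.closure {f, g}) ≃*
        SemidirectProduct (Multiplicative (ℤ →₀ Additive ↥(Subgroup.zpowers g)))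
          (Multiplicative ℤ) φ) := by
  have hfm := hf.strictMono
  have hg : (fixedBy ℝ g)ᶜ ⊆ Ioo x₀ (f x₀) := hsupp.trans_subset (Ioo_subset_Icc_self.trans hSI)
  have hU := pairwise_disjoint_zpow_smul_Ioo hfm hfund.1
  refine ⟨fun i j hij => ?_, shiftAut _, shiftAut_apply,
    nonempty_closure_pair_mulEquiv_wreath hg hU (notMem_zpow_smul_Ioo hfm hfund.1)
      (strictMono_zpow_apply hfm hfund.1).injective⟩
  simp only [zpow_neg]
  exact disjoint_compl_fixedBy_conj hg hU hij

/-- if `g` is supported on a single interval contained in the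
interior of a fundamental domain `[x₀, f x₀]` of `f` (inside the support of `f`,
where `f` moves points to the right), then the conjugates `fⁱ g f⁻ⁱ` have
pairwise disjoint supports, and `⟨f, g⟩` is isomorphic to the wreath-type
product `(⊕_ℤ ⟨g⟩) ⋊ ℤ`, where `ℤ` acts by shifting the factors. -/
theorem stmt15 (f g : Equiv.Perm ℝ) (hf : HomeoOnIcc f) (hg : HomeoOnIcc g)
    (x₀ a b : ℝ) (hab : a < b)
    (hfund : x₀ < f x₀ ∧ Icc x₀ (f x₀) ⊆ closure {x : ℝ | f x ≠ x})
    (hmove : ∀ y ∈ interior (closure {x : ℝ | f x ≠ x}), y < f y)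
    (hsupp : {x : ℝ | g x ≠ x} = Ioo a b)
    (hS : Icc a b ⊆ interior (closure {x : ℝ | f x ≠ x}))
    (hSI : Icc a b ⊆ Ioo x₀ (f x₀)) :
    (∀ i j : ℤ, i ≠ j →
      Disjoint {x : ℝ | (f ^ i * g * f ^ (-i)) x ≠ x}
        {x : ℝ | (f ^ j * g * f ^ (-j)) x ≠ x}) ∧
    ∃ φ : Multiplicative ℤ →*
        MulAut (Multiplicative (ℤ →₀ Additive ↥(Subgroup.zpowers g))),
      (∀ (i : Multiplicative ℤ)
          (n : Multiplicative (ℤ →₀ Additive ↥(Subgroup.zpowers g))) (j : ℤ),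
        Multiplicative.toAdd ((φ i) n) j =
          Multiplicative.toAdd n (j - Multiplicative.toAdd i)) ∧
      Nonempty (↥(Subgroup.closure {f, g}) ≃*
        SemidirectProduct (Multiplicative (ℤ →₀ Additive ↥(Subgroup.zpowers g)))
          (Multiplicative ℤ) φ) :=
  stmt15_general f g hf x₀ a b hfund hsupp hSI
end
end
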